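/- Let M = [[A, b],[0, 0]] where A is invertible with A⁻¹ ≤ 0 entrywise and b ≤ 0. Let q = (p, qₙ) with p ∈ ℝⁿ, p ≤ 0 and qₙ ≥ 0. Then the linear complementarity problem LCP(−M, q) has a solution: v = (A⁻¹p, 0) satisfies v ≥ 0, −Mv + q ≥ 0, and vᵀ(−Mv + q) = 0. -/

import Mathlib

open Matrix

/-!
Since `A⁻¹ ≤ 0` and `p ≤ 0`, the block `A⁻¹p` is nonnegative. The last coordinate of `v` is
zero, so `Mv = (A A⁻¹ p, 0) = (p, 0)` and `-Mv + q = (0, qₙ) ≥ 0`. The supports of `v` and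
`-Mv + q` are disjoint, which gives complementarity.
-/

theorem mulVec_nonneg_of_nonpos {ι κ R : Type*} [Fintype κ] [CommRing R] [PartialOrder R]
    [IsOrderedRing R] {B : Matrix ι κ R} {x : κ → R} (hB : ∀ i j, B i j ≤ 0)
    (hx : ∀ j, x j ≤ 0) (i : ι) : 0 ≤ (B *ᵥ x) i :=
  Finset.sum_nonneg fun j _ => mul_nonneg_of_nonpos_of_nonpos (hB i j) (hx j)

theorem fromBlocks_mulVec_sum_elim_zero {l m n o α : Type*} [Fintype l] [Fintype m]
    [NonUnitalNonAssocSemiring α] (A : Matrix n l α) (B : Matrix n m α) (C : Matrix o l α)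
    (D : Matrix o m α) (x : l → α) :
    fromBlocks A B C D *ᵥ Sum.elim x 0 = Sum.elim (A *ᵥ x) (C *ᵥ x) := by
  simp [fromBlocks_mulVec]

theorem neg_fromBlocks_mulVec_add_sum_elim {m n R : Type*} [Fintype m] [DecidableEq m]
    [Fintype n] [CommRing R] {A : Matrix m m R} (hA : IsUnit A.det) (B : Matrix m n R)
    (D : Matrix n n R) (p : m → R) (r : n → R) :
    -fromBlocks A B 0 D *ᵥ Sum.elim (A⁻¹ *ᵥ p) 0 + Sum.elim p r = Sum.elim (0 : m → R) r := by
  rw [neg_mulVec, fromBlocks_mulVec_sum_elim_zero, mulVec_mulVec, mul_nonsing_inv A hA,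
    one_mulVec, zero_mulVec, ← Sum.elim_neg_neg, ← Sum.elim_add_add]
  simp

theorem stmt_13_general (n : ℕ) (A : Matrix (Fin n) (Fin n) ℝ)
    (hAinv : IsUnit A.det)
    (hAneg : ∀ i j, A⁻¹ i j ≤ 0)
    (b : Fin n → ℝ)
    (M : Matrix (Fin n ⊕ Fin 1) (Fin n ⊕ Fin 1) ℝ)
    (hM : M = Matrix.fromBlocks A (fun i _ => b i) 0 0)
    (p : Fin n → ℝ) (hp : ∀ i, p i ≤ 0) (qn : ℝ) (hqn : 0 ≤ qn)
    (q v : Fin n ⊕ Fin 1 → ℝ)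
    (hq : q = Sum.elim p (fun _ => qn))
    (hv : v = Sum.elim (A⁻¹ *ᵥ p) (fun _ => 0)) :
    (∀ i, 0 ≤ v i) ∧ (∀ i, 0 ≤ ((-M) *ᵥ v + q) i) ∧
      v ⬝ᵥ ((-M) *ᵥ v + q) = 0 := by
  have hw : (-M) *ᵥ v + q = Sum.elim (0 : Fin n → ℝ) (fun _ => qn) := by
    subst hM hv hq
    exact neg_fromBlocks_mulVec_add_sum_elim hAinv _ 0 p _
  subst hv
  rw [hw]
  refine ⟨?_, ?_, ?_⟩
  · rintro (i | i)
    · exact mulVec_nonneg_of_nonpos hAneg hp i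
    · exact le_rfl
  · rintro (i | i)
    · exact le_rfl
    · exact hqn
  · simp

/-- For `M = [[A, b],[0, 0]]` with `A⁻¹ ≤ 0`, `b ≤ 0`, and `q = (p, qₙ)` with
`p ≤ 0`, `qₙ ≥ 0`, the vector `v = (A⁻¹p, 0)` solves `LCP(−M, q)`. -/
theorem stmt_13 (n : ℕ) (A : Matrix (Fin n) (Fin n) ℝ)
    (hAinv : IsUnit A.det)
    (hAneg : ∀ i j, A⁻¹ i j ≤ 0)
    (b : Fin n → ℝ) (hb : ∀ i, b i ≤ 0)
    (M : Matrix (Fin n ⊕ Fin 1) (Fin n ⊕ Fin 1) ℝ)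
    (hM : M = Matrix.fromBlocks A (fun i _ => b i) 0 0)
    (p : Fin n → ℝ) (hp : ∀ i, p i ≤ 0) (qn : ℝ) (hqn : 0 ≤ qn)
    (q v : Fin n ⊕ Fin 1 → ℝ)
    (hq : q = Sum.elim p (fun _ => qn))
    (hv : v = Sum.elim (A⁻¹ *ᵥ p) (fun _ => 0)) :
    (∀ i, 0 ≤ v i) ∧ (∀ i, 0 ≤ ((-M) *ᵥ v + q) i) ∧
      v ⬝ᵥ ((-M) *ᵥ v + q) = 0 :=
  stmt_13_general n A hAinv hAneg b M hM p hp qn hqn q v hq hv
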